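/- Let E ⊆ ℝⁿ × ℝ be open, let φ(x,t) = (x e^{−2t}, (1−e^{−4t})/4), let u ∈ C^{2,1}(φ(E)) have continuous first-order spatial derivatives, and set U(x,t) = u(φ(x,t)). Then U ∈ C^{2,1}(E) and at every point (x,t) ∈ E one has the identity ∂_t U − ΔU + 2x·∇U = e^{−4t} (∂_s u − Δ_y u)(φ(x,t)). Consequently, u is a classical temperature on φ(E) (i.e. ∂_s u = Δ_y u) if and only if U ∈ T_OU(E), and ∂_s u ≤ Δ_y u on φ(E) if and only if U ∈ T^sub_OU(E). -/

import Mathlib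

open Real MeasureTheory Set Filter
open scoped ENNReal

noncomputable section

/-- Space-time: `ℝⁿ × ℝ`. -/
abbrev Spt (n : ℕ) := EuclideanSpace ℝ (Fin n) × ℝ

/-- Partial derivative in the time variable. -/
def ptime {n : ℕ} (U : Spt n → ℝ) (z : Spt n) : ℝ :=
  deriv (fun τ => U (z.1, τ)) z.2

/-- Partial derivative in the `i`-th spatial variable. -/
def pspace {n : ℕ} (i : Fin n) (U : Spt n → ℝ) (z : Spt n) : ℝ :=
  deriv (fun a => U (WithLp.toLp 2 (Function.update z.1 i a), z.2)) (z.1 i)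

/-- Second partial derivative `∂²_{x_i x_j}`. -/
def pspace2 {n : ℕ} (i j : Fin n) (U : Spt n → ℝ) (z : Spt n) : ℝ :=
  pspace i (pspace j U) z

/-- Spatial Laplacian. -/
def lap {n : ℕ} (U : Spt n → ℝ) (z : Spt n) : ℝ := ∑ i, pspace2 i i U z

/-- `x · ∇U`. -/
def xgrad {n : ℕ} (U : Spt n → ℝ) (z : Spt n) : ℝ := ∑ i, z.1 i * pspace i U z

/-- `U ∈ C^{2,1}(E)`: the partials `∂_t U` and `∂²_{x_i x_j} U` exist and are continuous on `E`. -/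
structure C21 {n : ℕ} (E : Set (Spt n)) (U : Spt n → ℝ) : Prop where
  diff_t : ∀ z ∈ E, DifferentiableAt ℝ (fun τ => U (z.1, τ)) z.2
  cont_t : ContinuousOn (ptime U) E
  diff_x : ∀ z ∈ E, ∀ i : Fin n,
    DifferentiableAt ℝ (fun a => U (WithLp.toLp 2 (Function.update z.1 i a), z.2)) (z.1 i)
  diff_xx : ∀ z ∈ E, ∀ i j : Fin n,
    DifferentiableAt ℝ (fun a => pspace j U (WithLp.toLp 2 (Function.update z.1 i a), z.2)) (z.1 i)
  cont_xx : ∀ i j : Fin n, ContinuousOn (pspace2 i j U) E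

/-- Classical temperatures: `∂_t u = Δu`. -/
def IsHeat {n : ℕ} (E : Set (Spt n)) (u : Spt n → ℝ) : Prop :=
  ∀ z ∈ E, ptime u z = lap u z

/-- Classical subtemperatures: `∂_t u ≤ Δu`. -/
def IsSubHeat {n : ℕ} (E : Set (Spt n)) (u : Spt n → ℝ) : Prop :=
  ∀ z ∈ E, ptime u z ≤ lap u z

/-- Ornstein-Uhlenbeck temperatures: `∂_t U = ΔU - 2 x·∇U`. -/
def IsOU {n : ℕ} (E : Set (Spt n)) (U : Spt n → ℝ) : Prop :=
  ∀ z ∈ E, ptime U z = lap U z - 2 * xgrad U z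

/-- Ornstein-Uhlenbeck subtemperatures: `∂_t U ≤ ΔU - 2 x·∇U`. -/
def IsSubOU {n : ℕ} (E : Set (Spt n)) (U : Spt n → ℝ) : Prop :=
  ∀ z ∈ E, ptime U z ≤ lap U z - 2 * xgrad U z

/-- Hermite temperatures: `∂_t U = ΔU - |x|² U`. -/
def IsH {n : ℕ} (E : Set (Spt n)) (U : Spt n → ℝ) : Prop :=
  ∀ z ∈ E, ptime U z = lap U z - ‖z.1‖ ^ 2 * U z

/-- Hermite subtemperatures: `∂_t U ≤ ΔU - |x|² U`. -/
def IsSubH {n : ℕ} (E : Set (Spt n)) (U : Spt n → ℝ) : Prop :=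
  ∀ z ∈ E, ptime U z ≤ lap U z - ‖z.1‖ ^ 2 * U z

/-- The OU/Hermite heat ball `Ξ(x₀,t₀;r)`. -/
def XiBall (n : ℕ) (x₀ : EuclideanSpace ℝ (Fin n)) (t₀ r : ℝ) : Set (Spt n) :=
  {z | z.2 < t₀ ∧ Real.exp (-4 * z.2) - Real.exp (-4 * t₀) < 4 * r ∧
    ‖Real.exp (-2 * z.2) • z.1 - Real.exp (-2 * t₀) • x₀‖ ^ 2 <
      ((n : ℝ) / 2) * (Real.exp (-4 * z.2) - Real.exp (-4 * t₀)) *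
        Real.log (4 * r / (Real.exp (-4 * z.2) - Real.exp (-4 * t₀)))}

/-- The kernel `K^OU_{x,t}(y,s)`. -/
def KOU (n : ℕ) (x : EuclideanSpace ℝ (Fin n)) (t : ℝ) (y : EuclideanSpace ℝ (Fin n)) (s : ℝ) : ℝ :=
  8 * Real.exp (-2 * ((n : ℝ) + 2) * s) *
    ‖Real.exp (-2 * t) • x - Real.exp (-2 * s) • y‖ ^ 2 /
      (Real.exp (-4 * t) - Real.exp (-4 * s)) ^ 2

/-- The kernel `K^H_{x,t}(y,s)`. -/
def KH (n : ℕ) (x : EuclideanSpace ℝ (Fin n)) (t : ℝ) (y : EuclideanSpace ℝ (Fin n)) (s : ℝ) : ℝ :=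
  Real.exp ((n : ℝ) * (s - t)) * Real.exp ((‖y‖ ^ 2 - ‖x‖ ^ 2) / 2) * KOU n x t y s

/-- `Λ(z₀,E)`: points reachable from `z₀` by a polygonal path in `E` along which
the time variable strictly decreases. -/
def Lambda {n : ℕ} (E : Set (Spt n)) (z₀ : Spt n) : Set (Spt n) :=
  {q | ∃ m : ℕ, 0 < m ∧ ∃ P : ℕ → Spt n, P 0 = z₀ ∧ P m = q ∧
    (∀ k < m, segment ℝ (P k) (P (k + 1)) ⊆ E) ∧
    (∀ k < m, (P (k + 1)).2 < (P k).2)}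

/-- The map `φ(x,t) = (x e^{-2t}, (1-e^{-4t})/4)`. -/
def phiMap {n : ℕ} (z : Spt n) : Spt n :=
  (Real.exp (-2 * z.2) • z.1, (1 - Real.exp (-4 * z.2)) / 4)

/-- The Hermite-cylindrical set `Γ_R(x₀,t₀)`. -/
def GammaCyl (n : ℕ) (x₀ : EuclideanSpace ℝ (Fin n)) (t₀ R : ℝ) : Set (Spt n) :=
  {z | ‖Real.exp (2 * (t₀ - z.2)) • z.1 - x₀‖ < R ∧ t₀ - R ^ 2 < z.2 ∧ z.2 < t₀}

/-- The measure `dν = e^{-2(n+2)t} dx dt`. -/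
def nuMeas (n : ℕ) : Measure (Spt n) :=
  volume.withDensity fun z => ENNReal.ofReal (Real.exp (-2 * ((n : ℝ) + 2) * z.2))

/-- The open band `ℝⁿ × (0, T₀)` for `T₀ ∈ (0,∞]`. -/
def band (n : ℕ) (T₀ : ℝ≥0∞) : Set (Spt n) :=
  {z | 0 < z.2 ∧ ENNReal.ofReal z.2 < T₀}

/-- The closed-below band `ℝⁿ × [0, T₀)` for `T₀ ∈ (0,∞]`. -/
def bandCl (n : ℕ) (T₀ : ℝ≥0∞) : Set (Spt n) :=
  {z | 0 ≤ z.2 ∧ ENNReal.ofReal z.2 < T₀}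

end

/-!
At fixed time `φ` scales space by `e^{-2t}`, so every spatial derivative of `U = u ∘ φ` carries
a factor `e^{-2t}` and `ΔU = e^{-4t} (Δu) ∘ φ`. In time, `t ↦ φ(x, t)` has velocity
`(-2 e^{-2t} x, e^{-4t})`, so the chain rule gives
`∂_t U = -2 e^{-2t} x · (∇u) ∘ φ + e^{-4t} (∂_s u) ∘ φ = -2 x · ∇U + e^{-4t} (∂_s u) ∘ φ`.
This chain rule needs `u` to be jointly differentiable, which follows from the continuity of its
first spatial partials: change one coordinate at a time and apply the mean value theorem.
Since `e^{-4t} > 0`, the identity gives both equivalences.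
-/

open Asymptotics Topology

section PartialDerivatives

variable {n : ℕ}

def piecewiseCoords (x y : EuclideanSpace ℝ (Fin n)) (k : ℕ) : EuclideanSpace ℝ (Fin n) :=
  WithLp.toLp 2 fun j => if (j : ℕ) < k then x j else y j

@[simp] lemma piecewiseCoords_zero (x y : EuclideanSpace ℝ (Fin n)) :
    piecewiseCoords x y 0 = y := by
  ext j; simp [piecewiseCoords]

@[simp] lemma piecewiseCoords_dim (x y : EuclideanSpace ℝ (Fin n)) :
    piecewiseCoords x y n = x := by
  ext j; simp [piecewiseCoords]

@[simp] lemma piecewiseCoords_self (x : EuclideanSpace ℝ (Fin n)) (k : ℕ) :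
    piecewiseCoords x x k = x := by
  ext j; simp [piecewiseCoords]

lemma update_piecewiseCoords_left (x y : EuclideanSpace ℝ (Fin n)) (i : Fin n) :
    WithLp.toLp 2 (Function.update (piecewiseCoords x y i) i (x i)) =
      piecewiseCoords x y (i + 1) := by
  ext j
  rcases eq_or_ne j i with rfl | hj
  · simp [piecewiseCoords]
  · have : j < i ↔ j ≤ i := ⟨le_of_lt, fun h => lt_of_le_of_ne h hj⟩
    simp [piecewiseCoords, hj, this]

lemma update_piecewiseCoords_right (x y : EuclideanSpace ℝ (Fin n)) (i : Fin n) :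
    WithLp.toLp 2 (Function.update (piecewiseCoords x y i) i (y i)) = piecewiseCoords x y i := by
  ext j
  rcases eq_or_ne j i with rfl | hj
  · simp [piecewiseCoords]
  · simp [hj]

lemma continuous_piecewiseCoords_left (y : EuclideanSpace ℝ (Fin n)) (k : ℕ) :
    Continuous fun x => piecewiseCoords x y k := by
  refine (PiLp.continuous_toLp 2 _).comp (continuous_pi fun j => ?_)
  split_ifs
  · exact (continuous_apply j).comp (PiLp.continuous_ofLp 2 _)
  · exact continuous_const

lemma abs_coord_sub_le_norm (z z₀ : Spt n) (i : Fin n) :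
    |z.1 i - z₀.1 i| ≤ ‖z - z₀‖ := by
  calc |z.1 i - z₀.1 i| = ‖(z - z₀).1 i‖ := rfl
    _ ≤ ‖(z - z₀).1‖ := PiLp.norm_apply_le _ i
    _ ≤ ‖z - z₀‖ := norm_fst_le _

lemma norm_sub_sub_mul_le_of_hasDerivAt {f f' : ℝ → ℝ} {a b c ε : ℝ}
    (hf : ∀ x ∈ segment ℝ a b, HasDerivAt f (f' x) x)
    (hf' : ∀ x ∈ segment ℝ a b, ‖f' x - c‖ ≤ ε) :
    ‖f b - f a - c * (b - a)‖ ≤ ε * ‖b - a‖ := by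
  have := (convex_segment a b).norm_image_sub_le_of_norm_hasDerivWithin_le
    (f := fun x => f x - c * x)
    (fun x hx => ((hf x hx).sub ((hasDerivAt_id x).const_mul c)).hasDerivWithinAt)
    (fun x hx => by simpa using hf' x hx) (left_mem_segment ..) (right_mem_segment ..)
  rwa [show f b - f a - c * (b - a) = f b - c * b - (f a - c * a) by ring]

lemma tendsto_update_piecewiseCoords (z₀ : Spt n) (i : Fin n) :
    Tendsto (fun p : Spt n × ℝ =>
        ((WithLp.toLp 2 (Function.update (piecewiseCoords p.1.1 z₀.1 i) i p.2), p.1.2) : Spt n))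
      (𝓝 z₀ ×ˢ 𝓝 (z₀.1 i)) (𝓝 z₀) := by
  rw [← nhds_prod_eq]
  have hcont : Continuous fun p : Spt n × ℝ =>
      ((WithLp.toLp 2 (Function.update (piecewiseCoords p.1.1 z₀.1 i) i p.2), p.1.2) : Spt n) :=
    ((PiLp.continuous_toLp 2 _).comp <| (PiLp.continuous_ofLp 2 _ |>.comp <|
      (continuous_piecewiseCoords_left _ _).comp (continuous_fst.comp continuous_fst)).update i
        continuous_snd).prodMk (continuous_snd.comp continuous_fst)
  simpa [update_piecewiseCoords_right] using hcont.tendsto (z₀, z₀.1 i)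

lemma isLittleO_piecewiseCoords_step {v : Spt n → ℝ} {z₀ : Spt n}
    (hdiff : ∀ᶠ w in 𝓝 z₀, ∀ i, DifferentiableAt ℝ
      (fun a => v (WithLp.toLp 2 (Function.update w.1 i a), w.2)) (w.1 i))
    {i : Fin n} (hcont : ContinuousAt (pspace i v) z₀) :
    (fun z : Spt n => v (piecewiseCoords z.1 z₀.1 (i + 1), z.2) -
        v (piecewiseCoords z.1 z₀.1 i, z.2) - pspace i v z₀ * (z.1 i - z₀.1 i))
      =o[𝓝 z₀] fun z => z - z₀ := by
  set γ : Spt n × ℝ → Spt n := fun p =>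
    (WithLp.toLp 2 (Function.update (piecewiseCoords p.1.1 z₀.1 i) i p.2), p.1.2) with hγ
  rw [isLittleO_iff]
  intro c hc
  have hnear : ∀ᶠ p in 𝓝 z₀ ×ˢ 𝓝 (z₀.1 i),
      HasDerivAt (fun b => v (γ (p.1, b))) (pspace i v (γ (p.1, p.2))) p.2 ∧
        ‖pspace i v (γ (p.1, p.2)) - pspace i v z₀‖ ≤ c := by
    have hγ₀ := tendsto_update_piecewiseCoords z₀ i
    filter_upwards [hγ₀.eventually hdiff,
      hγ₀.eventually (hcont.eventually (Metric.closedBall_mem_nhds _ hc))] with p hp hp'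
    refine ⟨?_, by simpa [dist_eq_norm] using hp'⟩
    simpa [hγ, pspace] using (hp i).hasDerivAt
  have hcoord : Tendsto (fun z : Spt n => z.1 i) (𝓝 z₀) (𝓝 (z₀.1 i)) :=
    ((EuclideanSpace.proj i).continuous.comp continuous_fst).tendsto z₀
  have hseg := Filter.Eventually.segment_of_prod_nhds (r := fun z a =>
      HasDerivAt (fun b => v (γ (z, b))) (pspace i v (γ (z, a))) a ∧
        ‖pspace i v (γ (z, a)) - pspace i v z₀‖ ≤ c) tendsto_const_nhds hcoord hnear
  filter_upwards [hseg] with z hz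
  have hmvt := norm_sub_sub_mul_le_of_hasDerivAt (fun a ha => (hz a ha).1) (fun a ha => (hz a ha).2)
  simp only [hγ, update_piecewiseCoords_left, update_piecewiseCoords_right] at hmvt
  exact hmvt.trans (by gcongr; exact abs_coord_sub_le_norm z z₀ i)

lemma isLittleO_sub_sub_sum_pspace_mul {v : Spt n → ℝ} {z₀ : Spt n}
    (hdiff : ∀ᶠ w in 𝓝 z₀, ∀ i, DifferentiableAt ℝ
      (fun a => v (WithLp.toLp 2 (Function.update w.1 i a), w.2)) (w.1 i))
    (hcont : ∀ i, ContinuousAt (pspace i v) z₀) :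
    (fun z : Spt n => v z - v (z₀.1, z.2) - ∑ i, pspace i v z₀ * (z.1 i - z₀.1 i))
      =o[𝓝 z₀] fun z => z - z₀ := by
  have hsum := IsLittleO.sum (s := Finset.univ) fun i _ =>
    isLittleO_piecewiseCoords_step hdiff (hcont i)
  refine hsum.congr_left fun z => ?_
  rw [Finset.sum_apply, Finset.sum_sub_distrib, Fin.sum_univ_eq_sum_range
    (fun k => v (piecewiseCoords z.1 z₀.1 (k + 1), z.2) - v (piecewiseCoords z.1 z₀.1 k, z.2)),
    Finset.sum_range_sub (fun k => v (piecewiseCoords z.1 z₀.1 k, z.2))]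
  simp

noncomputable def spaceTimeForm (g : Fin n → ℝ) (c : ℝ) : Spt n →L[ℝ] ℝ :=
  (∑ i, g i • (EuclideanSpace.proj i).comp (ContinuousLinearMap.fst ℝ _ ℝ)) +
    c • ContinuousLinearMap.snd ℝ _ ℝ

@[simp] lemma spaceTimeForm_apply (g : Fin n → ℝ) (c : ℝ) (w : Spt n) :
    spaceTimeForm g c w = ∑ i, g i * w.1 i + c * w.2 := by
  simp [spaceTimeForm]

/-- Only the time derivative at `z₀` itself is needed: the spatial increments are taken at the
moved time `z.2`, and the continuity of the spatial partials at `z₀` absorbs that move. -/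
theorem hasFDerivAt_of_continuousAt_pspace {v : Spt n → ℝ} {z₀ : Spt n}
    (hdiff : ∀ᶠ w in 𝓝 z₀, ∀ i, DifferentiableAt ℝ
      (fun a => v (WithLp.toLp 2 (Function.update w.1 i a), w.2)) (w.1 i))
    (hcont : ∀ i, ContinuousAt (pspace i v) z₀)
    (hdt : DifferentiableAt ℝ (fun τ => v (z₀.1, τ)) z₀.2) :
    HasFDerivAt v (spaceTimeForm (fun i => pspace i v z₀) (ptime v z₀)) z₀ := by
  have htime : (fun z : Spt n => v (z₀.1, z.2) - v z₀ - (z.2 - z₀.2) • ptime v z₀)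
      =o[𝓝 z₀] fun z => z - z₀ :=
    ((hasDerivAt_iff_isLittleO.mp hdt.hasDerivAt).comp_tendsto
      (continuous_snd.tendsto z₀)).trans_isBigO (isBigO_of_le _ fun z => norm_snd_le (z - z₀))
  rw [hasFDerivAt_iff_isLittleO]
  refine ((isLittleO_sub_sub_sum_pspace_mul hdiff hcont).add htime).congr_left fun z => ?_
  simp only [mul_sub, Finset.sum_sub_distrib, smul_eq_mul, spaceTimeForm_apply, Prod.fst_sub,
    PiLp.sub_apply, Prod.snd_sub]
  ring

end PartialDerivatives

section Transference

variable {n : ℕ}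

noncomputable def phiInv (w : Spt n) : Spt n :=
  ((√(1 - 4 * w.2))⁻¹ • w.1, -Real.log (1 - 4 * w.2) / 4)

lemma continuous_phiMap : Continuous (phiMap : Spt n → Spt n) := by
  unfold phiMap; fun_prop

lemma continuousOn_phiInv : ContinuousOn (phiInv : Spt n → Spt n) {w | w.2 < 1 / 4} := by
  intro w hw
  have hpos : 0 < 1 - 4 * w.2 := by linarith [show w.2 < 1 / 4 from hw]
  unfold phiInv
  refine ContinuousAt.continuousWithinAt (ContinuousAt.prodMk ?_ ?_)
  · exact ((continuousAt_snd.const_mul 4 |>.const_sub 1).sqrt.inv₀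
      (Real.sqrt_pos.mpr hpos).ne').smul continuousAt_fst
  · exact ((continuousAt_snd.const_mul 4 |>.const_sub 1).log hpos.ne').neg.div_const 4

lemma phiInv_phiMap (z : Spt n) : phiInv (phiMap z) = z := by
  have h4 : 1 - 4 * ((1 - rexp (-4 * z.2)) / 4) = rexp (-2 * z.2) ^ 2 := by
    rw [← Real.exp_nat_mul]; ring_nf
  ext1
  · simp only [phiInv, phiMap, h4, Real.sqrt_sq (Real.exp_pos _).le, smul_smul,
      inv_mul_cancel₀ (Real.exp_pos _).ne', one_smul]
  · simp only [phiInv, phiMap, h4, ← Real.exp_nat_mul, Real.log_exp]; ring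

lemma phiMap_phiInv {w : Spt n} (hw : w.2 < 1 / 4) : phiMap (phiInv w) = w := by
  have hpos : 0 < 1 - 4 * w.2 := by linarith
  have he2 : rexp (-2 * (-Real.log (1 - 4 * w.2) / 4)) = √(1 - 4 * w.2) := by
    rw [Real.sqrt_eq_rpow, Real.rpow_def_of_pos hpos]; ring_nf
  have he4 : rexp (-4 * (-Real.log (1 - 4 * w.2) / 4)) = 1 - 4 * w.2 := by
    rw [show -4 * (-Real.log (1 - 4 * w.2) / 4) = Real.log (1 - 4 * w.2) by ring,
      Real.exp_log hpos]
  ext1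
  · simp only [phiInv, phiMap, he2, smul_smul, mul_inv_cancel₀ (Real.sqrt_pos.mpr hpos).ne',
      one_smul]
  · simp only [phiInv, phiMap, he4]; ring

lemma phiMap_image_eq (E : Set (Spt n)) : phiMap '' E = {w | w.2 < 1 / 4} ∩ phiInv ⁻¹' E := by
  ext w
  constructor
  · rintro ⟨z, hz, rfl⟩
    refine ⟨?_, by simpa [phiInv_phiMap] using hz⟩
    show (1 - rexp (-4 * z.2)) / 4 < 1 / 4
    linarith [Real.exp_pos (-4 * z.2)]
  · rintro ⟨hw, hE⟩
    exact ⟨phiInv w, hE, phiMap_phiInv hw⟩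

lemma isOpen_phiMap_image {E : Set (Spt n)} (hE : IsOpen E) : IsOpen (phiMap '' E) := by
  rw [phiMap_image_eq]
  exact continuousOn_phiInv.isOpen_inter_preimage (isOpen_lt continuous_snd continuous_const) hE

lemma phiMap_update (z : Spt n) (i : Fin n) (a : ℝ) :
    phiMap (WithLp.toLp 2 (Function.update z.1 i a), z.2) =
      (WithLp.toLp 2 (Function.update (phiMap z).1 i (rexp (-2 * z.2) * a)), (phiMap z).2) := by
  ext1
  · ext j
    rcases eq_or_ne j i with rfl | hj
    · simp [phiMap]
    · simp [phiMap, hj]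
  · rfl

lemma comp_phiMap_update (g : Spt n → ℝ) (z : Spt n) (i : Fin n) :
    (fun a => g (phiMap (WithLp.toLp 2 (Function.update z.1 i a), z.2))) =
      (fun b => g (WithLp.toLp 2 (Function.update (phiMap z).1 i b), (phiMap z).2)) ∘
        (rexp (-2 * z.2) * ·) := by
  funext a
  simp only [Function.comp_apply, phiMap_update]

lemma pspace_comp_phiMap (g : Spt n → ℝ) (i : Fin n) (z : Spt n) :
    pspace i (fun w => g (phiMap w)) z = rexp (-2 * z.2) * pspace i g (phiMap z) := by
  rw [pspace, comp_phiMap_update]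
  exact deriv_comp_mul_left (rexp (-2 * z.2))
    (fun b => g (WithLp.toLp 2 (Function.update (phiMap z).1 i b), (phiMap z).2)) (z.1 i)

lemma differentiableAt_comp_phiMap_update {g : Spt n → ℝ} {z : Spt n} {i : Fin n}
    (hg : DifferentiableAt ℝ (fun b => g (WithLp.toLp 2 (Function.update (phiMap z).1 i b),
      (phiMap z).2)) ((phiMap z).1 i)) :
    DifferentiableAt ℝ (fun a => g (phiMap (WithLp.toLp 2 (Function.update z.1 i a), z.2)))
      (z.1 i) := by
  rw [comp_phiMap_update]
  exact hg.comp (z.1 i) ((differentiableAt_id (x := z.1 i)).const_mul (rexp (-2 * z.2)))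

lemma pspace_time_mul (c : ℝ → ℝ) (h : Spt n → ℝ) (i : Fin n) (z : Spt n) :
    pspace i (fun w => c w.2 * h w) z = c z.2 * pspace i h z :=
  deriv_const_mul_field (v := fun a => h (WithLp.toLp 2 (Function.update z.1 i a), z.2)) (c z.2)

lemma pspace2_comp_phiMap (g : Spt n → ℝ) (i j : Fin n) (z : Spt n) :
    pspace2 i j (fun w => g (phiMap w)) z = rexp (-4 * z.2) * pspace2 i j g (phiMap z) := by
  have : pspace j (fun w => g (phiMap w)) = fun w => rexp (-2 * w.2) * pspace j g (phiMap w) :=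
    funext (pspace_comp_phiMap g j)
  rw [pspace2, this, pspace_time_mul (fun t => rexp (-2 * t)), pspace_comp_phiMap, ← mul_assoc,
    ← Real.exp_add, pspace2]
  ring_nf

lemma lap_comp_phiMap (g : Spt n → ℝ) (z : Spt n) :
    lap (fun w => g (phiMap w)) z = rexp (-4 * z.2) * lap g (phiMap z) := by
  simp only [lap, pspace2_comp_phiMap, Finset.mul_sum]

lemma xgrad_comp_phiMap (g : Spt n → ℝ) (z : Spt n) :
    xgrad (fun w => g (phiMap w)) z = rexp (-2 * z.2) * ∑ i, z.1 i * pspace i g (phiMap z) := by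
  rw [xgrad, Finset.mul_sum]
  exact Finset.sum_congr rfl fun i _ => by rw [pspace_comp_phiMap]; ring

lemma hasDerivAt_phiMap_time (z : Spt n) :
    HasDerivAt (fun τ => phiMap ((z.1, τ) : Spt n))
      (((-2 * rexp (-2 * z.2)) • z.1, rexp (-4 * z.2)) : Spt n) z.2 := by
  have h₁ : HasDerivAt (fun τ : ℝ => rexp (-2 * τ) • z.1) ((-2 * rexp (-2 * z.2)) • z.1)
      z.2 := by
    simpa [mul_comm] using ((hasDerivAt_id z.2).const_mul (-2)).exp.smul_const z.1
  have h₂ : HasDerivAt (fun τ : ℝ => (1 - rexp (-4 * τ)) / 4) (rexp (-4 * z.2)) z.2 := by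
    refine ((((hasDerivAt_id z.2).const_mul (-4)).exp.const_sub 1).div_const 4).congr_deriv ?_
    simp only [id, mul_one]
    ring
  exact h₁.prodMk h₂

lemma HasFDerivAt.hasDerivAt_time_comp_phiMap {g : Spt n → ℝ} {z : Spt n}
    (hg : HasFDerivAt g (spaceTimeForm (fun i => pspace i g (phiMap z)) (ptime g (phiMap z)))
      (phiMap z)) :
    HasDerivAt (fun τ => g (phiMap ((z.1, τ) : Spt n)))
      (-2 * rexp (-2 * z.2) * ∑ i, z.1 i * pspace i g (phiMap z) +
        rexp (-4 * z.2) * ptime g (phiMap z)) z.2 := by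
  refine (hg.comp_hasDerivAt z.2 (hasDerivAt_phiMap_time z)).congr_deriv ?_
  simp only [spaceTimeForm_apply, PiLp.smul_apply, smul_eq_mul, Finset.mul_sum]
  congr 1
  · exact Finset.sum_congr rfl fun i _ => by ring
  · ring

lemma ptime_sub_lap_add_xgrad_comp_phiMap {g : Spt n → ℝ} {z : Spt n}
    (hg : HasFDerivAt g (spaceTimeForm (fun i => pspace i g (phiMap z)) (ptime g (phiMap z)))
      (phiMap z)) :
    ptime (fun w => g (phiMap w)) z - lap (fun w => g (phiMap w)) z +
        2 * xgrad (fun w => g (phiMap w)) z =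
      rexp (-4 * z.2) * (ptime g (phiMap z) - lap g (phiMap z)) := by
  rw [ptime, hg.hasDerivAt_time_comp_phiMap.deriv, lap_comp_phiMap, xgrad_comp_phiMap]
  ring

lemma C21.hasFDerivAt {Ω : Set (Spt n)} (hΩ : IsOpen Ω) {u : Spt n → ℝ} (hu : C21 Ω u)
    (hux : ∀ i, ContinuousOn (pspace i u) Ω) {w : Spt n} (hw : w ∈ Ω) :
    HasFDerivAt u (spaceTimeForm (fun i => pspace i u w) (ptime u w)) w :=
  hasFDerivAt_of_continuousAt_pspace (eventually_of_mem (hΩ.mem_nhds hw) hu.diff_x)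
    (fun i => (hux i).continuousAt (hΩ.mem_nhds hw)) (hu.diff_t w hw)

lemma C21.comp_phiMap {E : Set (Spt n)} (hE : IsOpen E) {u : Spt n → ℝ}
    (hu : C21 (phiMap '' E) u) (hux : ∀ i, ContinuousOn (pspace i u) (phiMap '' E)) :
    C21 E fun z => u (phiMap z) := by
  have hφ : ContinuousOn phiMap E := continuous_phiMap.continuousOn
  have hmaps : MapsTo phiMap E (phiMap '' E) := mapsTo_image _ _
  have hderiv (z : Spt n) (hz : z ∈ E) := (hu.hasFDerivAt (isOpen_phiMap_image hE) hux
    (mem_image_of_mem _ hz)).hasDerivAt_time_comp_phiMap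
  have hpspace (j : Fin n) : pspace j (fun w => u (phiMap w)) =
      fun w => rexp (-2 * w.2) * pspace j u (phiMap w) :=
    funext (pspace_comp_phiMap u j)
  refine ⟨fun z hz => (hderiv z hz).differentiableAt, ?_, fun z hz i => ?_, fun z hz i j => ?_,
    fun i j => ?_⟩
  · have hux' (i : Fin n) := (hux i).comp hφ hmaps
    have hut := hu.cont_t.comp hφ hmaps
    refine ContinuousOn.congr ?_ fun z hz => (hderiv z hz).deriv
    fun_prop
  · exact differentiableAt_comp_phiMap_update (hu.diff_x _ (mem_image_of_mem _ hz) i)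
  · rw [hpspace]
    exact (differentiableAt_comp_phiMap_update
      (hu.diff_xx _ (mem_image_of_mem _ hz) i j)).const_mul (rexp (-2 * z.2))
  · refine ContinuousOn.congr ?_ fun z _ => pspace2_comp_phiMap u i j z
    have := (hu.cont_xx i j).comp hφ hmaps
    fun_prop

end Transference

theorem transference_heat_OU_general (n : ℕ) (E : Set (Spt n)) (hE : IsOpen E)
    (u : Spt n → ℝ) (hu : C21 (phiMap '' E) u)
    (hux : ∀ i : Fin n, ContinuousOn (pspace i u) (phiMap '' E))
    (U : Spt n → ℝ) (hUdef : ∀ z : Spt n, U z = u (phiMap z)) :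
    C21 E U ∧
    (∀ z ∈ E,
      ptime U z - lap U z + 2 * xgrad U z =
        Real.exp (-4 * z.2) * (ptime u (phiMap z) - lap u (phiMap z))) ∧
    (IsHeat (phiMap '' E) u ↔ IsOU E U) ∧
    (IsSubHeat (phiMap '' E) u ↔ IsSubOU E U) := by
  obtain rfl : U = fun z => u (phiMap z) := funext hUdef
  have hid (z : Spt n) (hz : z ∈ E) := ptime_sub_lap_add_xgrad_comp_phiMap
    (hu.hasFDerivAt (isOpen_phiMap_image hE) hux (mem_image_of_mem _ hz))
  refine ⟨hu.comp_phiMap hE hux, hid, ?_, ?_⟩ <;>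
    simp only [IsHeat, IsOU, IsSubHeat, IsSubOU, forall_mem_image] <;>
    refine forall₂_congr fun z hz => ⟨fun h => ?_, fun h => ?_⟩ <;>
    nlinarith [hid z hz, Real.exp_pos (-4 * z.2)]

/-- transference between classical temperatures and OU temperatures via `φ`. -/
theorem transference_heat_OU (n : ℕ) (hn : 1 ≤ n) (E : Set (Spt n)) (hE : IsOpen E)
    (u : Spt n → ℝ) (hu : C21 (phiMap '' E) u)
    (hux : ∀ i : Fin n, ContinuousOn (pspace i u) (phiMap '' E))
    (U : Spt n → ℝ) (hUdef : ∀ z : Spt n, U z = u (phiMap z)) :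
    C21 E U ∧
    (∀ z ∈ E,
      ptime U z - lap U z + 2 * xgrad U z =
        Real.exp (-4 * z.2) * (ptime u (phiMap z) - lap u (phiMap z))) ∧
    (IsHeat (phiMap '' E) u ↔ IsOU E U) ∧
    (IsSubHeat (phiMap '' E) u ↔ IsSubOU E U) :=
  transference_heat_OU_general n E hE u hu hux U hUdef
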